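/- arXiv:2401.17936 — 2 statements merged into one kernel-verified Lean document; each statement's English description precedes it below -/
import Mathlib

section
/- Assume hypotheses (D), (M), (I). Then for every ε>0 the map f_ε : ℝ × C_γ → ℝ^{n²}, f_ε(t,u) = D(u) + Σ^ε(u) + I(t), is continuous (with respect to the product of the standard topology on ℝ and the ‖·‖_γ-topology on C_γ). -/
open MeasureTheory Set Filter Topology Pointwise

noncomputable section

/-- Index set for the synaptic variables `z i j`, `i ≠ j`. -/
abbrev IdxZ (n : ℕ) := {p : Fin n × Fin n // p.1 ≠ p.2}

/-- The state space `ℝ^{n²} = ℝ^n × ℝ^{n(n-1)}`, with the norm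
`‖(x,z)‖ = max (‖x‖_∞) (‖z‖_∞)` (product of supremum norms). -/
abbrev NState (n : ℕ) := (Fin n → ℝ) × (IdxZ n → ℝ)

/-- The `C_γ` norm: `‖u‖_γ = sup_{t ≤ 0} e^{γ t} ‖u t‖`. -/
def gNorm (γ : ℝ) {E : Type*} [NormedAddCommGroup E] (u : ℝ → E) : ℝ :=
  ⨆ t : Iic (0 : ℝ), Real.exp (γ * t.1) * ‖u t.1‖

/-- Membership in `C_γ`: continuity on `(-∞,0]`, existence of a finite limit of
`e^{γ t} u t` as `t → -∞`, and boundedness of `e^{γ t} ‖u t‖` on `(-∞,0]`. -/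
def InC (γ : ℝ) {E : Type*} [NormedAddCommGroup E] [NormedSpace ℝ E] (u : ℝ → E) : Prop :=
  ContinuousOn u (Iic 0) ∧
    (∃ L : E, Tendsto (fun t => Real.exp (γ * t) • u t) atBot (𝓝 L)) ∧
    BddAbove (range fun t : Iic (0 : ℝ) => Real.exp (γ * t.1) * ‖u t.1‖)

/-- The history `u_t(s) = u (t+s)`. -/
def hist {E : Type*} (u : ℝ → E) (t : ℝ) : ℝ → E := fun s => u (t + s)

/-- The sigmoidal function `σ_ε (s) = 1/(1+e^{-s/ε})`. -/
def sigm (ε s : ℝ) : ℝ := 1 / (1 + Real.exp (-s / ε))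

/-- Hypothesis (D): `A i`, `B p` locally Lipschitz and bounded below by `α > 0`. -/
def HypD {n : ℕ} (α : ℝ) (A : Fin n → ℝ → ℝ) (B : IdxZ n → ℝ → ℝ) : Prop :=
  0 < α ∧ (∀ i, LocallyLipschitz (A i) ∧ ∀ s, α ≤ A i s) ∧
    ∀ p, LocallyLipschitz (B p) ∧ ∀ s, α ≤ B p s

/-- Hypothesis (M): `∫_{-∞}^0 e^{-γ t} dμ_p (t) < ∞`. -/
def HypM {n : ℕ} (γ : ℝ) (μ : IdxZ n → Measure ℝ) : Prop :=
  ∀ p, ∫⁻ t in Iic (0 : ℝ), ENNReal.ofReal (Real.exp (-γ * t)) ∂(μ p) < ⊤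

/-- Hypothesis (I): continuity of the external stimuli. -/
def HypI {n : ℕ} (Istim : Fin n → ℝ → ℝ) : Prop := ∀ i, Continuous (Istim i)

/-- Decay term `D`. -/
def decayT {n : ℕ} (A : Fin n → ℝ → ℝ) (B : IdxZ n → ℝ → ℝ) (u : ℝ → NState n) : NState n :=
  (fun i => -(A i ((u 0).1 i)) * (u 0).1 i, fun p => -(B p ((u 0).2 p)) * (u 0).2 p)

/-- Sigmoidal excitation and inhibition term `Σ^ε`. -/
def sigTerm {n : ℕ} (ε : ℝ) (μ : IdxZ n → Measure ℝ) (c d : IdxZ n → ℝ)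
    (Γ : Fin n → ℝ) (u : ℝ → NState n) : NState n :=
  (fun i => ∑ k : Fin n,
      if h : k ≠ i then
        ((u 0).2 ⟨(k, i), h⟩ - c ⟨(k, i), h⟩) *
          ∫ τ in Iic (0 : ℝ), sigm ε ((u τ).1 k - Γ k) ∂(μ ⟨(k, i), h⟩)
      else 0,
    fun p =>
      d p * (∫ τ in Iic (0 : ℝ), sigm ε ((u τ).1 p.1.1 - Γ p.1.1) ∂(μ p)) *
        max ((u 0).1 p.1.2) 0)

/-- Stimulus term `I(t) = ((I_i(t))_i, 0)`. -/
def stimT {n : ℕ} (Istim : Fin n → ℝ → ℝ) (t : ℝ) : NState n :=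
  (fun i => Istim i t, 0)

/-- Right-hand side `f_ε(t,u) = D(u) + Σ^ε(u) + I(t)` of the sigmoidal system. -/
def fEps {n : ℕ} (ε : ℝ) (A : Fin n → ℝ → ℝ) (B : IdxZ n → ℝ → ℝ)
    (μ : IdxZ n → Measure ℝ) (c d : IdxZ n → ℝ) (Γ : Fin n → ℝ)
    (Istim : Fin n → ℝ → ℝ) (t : ℝ) (u : ℝ → NState n) : NState n :=
  decayT A B u + sigTerm ε μ c d Γ u + stimT Istim t

/-- Solution of the sigmoidal system on `[t₀, t₁)` with initial datum `u₀` at `t₀`. -/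
def IsSigSolOn {n : ℕ} (ε : ℝ) (A : Fin n → ℝ → ℝ) (B : IdxZ n → ℝ → ℝ)
    (μ : IdxZ n → Measure ℝ) (c d : IdxZ n → ℝ) (Γ : Fin n → ℝ)
    (Istim : Fin n → ℝ → ℝ) (t₀ t₁ : ℝ) (u₀ u : ℝ → NState n) : Prop :=
  (∀ s ≤ (0 : ℝ), u (t₀ + s) = u₀ s) ∧ ContinuousOn u (Iio t₁) ∧
    ∀ t ∈ Ico t₀ t₁, HasDerivAt u (fEps ε A B μ c d Γ Istim t (hist u t)) t

/-- Solution of the sigmoidal system on the closed interval `[t₀, t₁]`. -/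
def IsSigSolOnC {n : ℕ} (ε : ℝ) (A : Fin n → ℝ → ℝ) (B : IdxZ n → ℝ → ℝ)
    (μ : IdxZ n → Measure ℝ) (c d : IdxZ n → ℝ) (Γ : Fin n → ℝ)
    (Istim : Fin n → ℝ → ℝ) (t₀ t₁ : ℝ) (u₀ u : ℝ → NState n) : Prop :=
  (∀ s ≤ (0 : ℝ), u (t₀ + s) = u₀ s) ∧ ContinuousOn u (Iic t₁) ∧
    ∀ t ∈ Ico t₀ t₁, HasDerivAt u (fEps ε A B μ c d Γ Istim t (hist u t)) t

/-- `b(ε) = ε log((1-ε)/ε)` for `ε ≠ 0`, `b(0) = 0`. -/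
def bfun (ε : ℝ) : ℝ := if ε = 0 then 0 else ε * Real.log ((1 - ε) / ε)

/-- The set-valued function `χ_ε`. -/
def chiSet (ε s : ℝ) : Set ℝ :=
  if s < -bfun ε then Icc 0 ε else if s ≤ bfun ε then Icc 0 1 else Icc (1 - ε) 1

/-- Aumann integral over `(-∞,0]` of a set-valued map `F` with respect to `μ`:
the set of integrals of integrable measurable selectors of `F`. -/
def aumann (F : ℝ → Set ℝ) (μ : Measure ℝ) : Set ℝ :=
  {y | ∃ s : ℝ → ℝ, Measurable s ∧ IntegrableOn s (Iic 0) μ ∧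
      (∀ t ≤ (0 : ℝ), s t ∈ F t) ∧ y = ∫ t in Iic (0 : ℝ), s t ∂μ}

/-- Directed Hausdorff pseudometric `haus(A,B) = sup_{a∈A} inf_{b∈B} |a-b|`. -/
def hausd (S T : Set ℝ) : ℝ :=
  sSup ((fun a => sInf ((fun b => |a - b|) '' T)) '' S)

/-- The `i`-th factor of `X^ε(u)`: the Minkowski sum over `k ≠ i` of
`(z_{ki}(0) - c_{ki}) • ∫ χ_ε(x_k(τ)-Γ_k) dμ_{ki}(τ)`. -/
def XsetX {n : ℕ} (ε : ℝ) (μ : IdxZ n → Measure ℝ) (c : IdxZ n → ℝ)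
    (Γ : Fin n → ℝ) (u : ℝ → NState n) (i : Fin n) : Set ℝ :=
  {y | ∃ g : Fin n → ℝ, g i = 0 ∧
      (∀ k, ∀ h : k ≠ i,
        g k ∈ ((u 0).2 ⟨(k, i), h⟩ - c ⟨(k, i), h⟩) •
          aumann (fun τ => chiSet ε ((u τ).1 k - Γ k)) (μ ⟨(k, i), h⟩)) ∧
      y = ∑ k, g k}

/-- The set-valued map `X^ε : C_γ → 𝒫(ℝ^{n²})`. -/
def Xset {n : ℕ} (ε : ℝ) (μ : IdxZ n → Measure ℝ) (c d : IdxZ n → ℝ)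
    (Γ : Fin n → ℝ) (u : ℝ → NState n) : Set (NState n) :=
  {v | (∀ i, v.1 i ∈ XsetX ε μ c Γ u i) ∧
      ∀ p : IdxZ n, v.2 p ∈ (d p * max ((u 0).1 p.1.2) 0) •
        aumann (fun τ => chiSet ε ((u τ).1 p.1.1 - Γ p.1.1)) (μ p)}

/-- Solution of the `ε`-inflated differential inclusion on `[t₀,t₁]` with initial
datum `u₀` at `t₀`: absolutely continuous on `[t₀,t₁]` (expressed in integral form)
with `u'(t) = D(u_t) + Σ(t) + I(t)` a.e. for some integrable selector `Σ(t) ∈ X^ε(u_t)`. -/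
def IsIncSolOn {n : ℕ} (ε : ℝ) (A : Fin n → ℝ → ℝ) (B : IdxZ n → ℝ → ℝ)
    (μ : IdxZ n → Measure ℝ) (c d : IdxZ n → ℝ) (Γ : Fin n → ℝ)
    (Istim : Fin n → ℝ → ℝ) (t₀ t₁ : ℝ) (u₀ u : ℝ → NState n) : Prop :=
  (∀ s ≤ (0 : ℝ), u (t₀ + s) = u₀ s) ∧ ContinuousOn u (Icc t₀ t₁) ∧
    ∃ S : ℝ → NState n,
      (∀ t ∈ Icc t₀ t₁, S t ∈ Xset ε μ c d Γ (hist u t)) ∧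
      IntegrableOn (fun s => decayT A B (hist u s) + S s + stimT Istim s) (Icc t₀ t₁) ∧
      ∀ t ∈ Icc t₀ t₁,
        u t = u₀ 0 + ∫ s in t₀..t, (decayT A B (hist u s) + S s + stimT Istim s)

/-- Clamped history: the canonical representative in `C_γ` of the history `u_t`. -/
def clampHist {n : ℕ} (u : ℝ → NState n) (t : ℝ) : ℝ → NState n :=
  fun s => u (t + min s 0)

/-- Attainability set `Φ^ε(t, t₀, u₀)` of the `ε`-inflated inclusion. -/
def attain {n : ℕ} (ε : ℝ) (A : Fin n → ℝ → ℝ) (B : IdxZ n → ℝ → ℝ)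
    (μ : IdxZ n → Measure ℝ) (c d : IdxZ n → ℝ) (Γ : Fin n → ℝ)
    (Istim : Fin n → ℝ → ℝ) (t t₀ : ℝ) (u₀ : ℝ → NState n) : Set (ℝ → NState n) :=
  {v | ∃ u, IsIncSolOn ε A B μ c d Γ Istim t₀ t u₀ u ∧ v = clampHist u t}

/-- Total mass `|μ_p|` of the measure `μ_p` on `(-∞,0]`. -/
def mTot {n : ℕ} (μ : IdxZ n → Measure ℝ) (p : IdxZ n) : ℝ := (μ p (Iic 0)).toReal

/-- Hypothesis (A). -/
def HypA {n : ℕ} (α : ℝ) (μ : IdxZ n → Measure ℝ) (d : IdxZ n → ℝ) : Prop :=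
  ∃ lx lz nx nz eta eps : IdxZ n → ℝ,
    (∀ p, lx p ∈ ({1, mTot μ p ^ 2, d p ^ 2, mTot μ p ^ 2 * d p ^ 2} : Set ℝ) ∧
        lz p ∈ ({1, mTot μ p ^ 2, d p ^ 2, mTot μ p ^ 2 * d p ^ 2} : Set ℝ) ∧
        lx p * lz p = mTot μ p ^ 2 * d p ^ 2 ∧
        nx p ∈ ({1, mTot μ p ^ 2} : Set ℝ) ∧ nz p ∈ ({1, mTot μ p ^ 2} : Set ℝ) ∧
        nx p * nz p = mTot μ p ^ 2 ∧ 0 < eta p ∧ 0 < eps p ∧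
        nz p / eta p + lz p / eps p < 2 * α) ∧
    ∀ i : Fin n,
      (∑ k : Fin n, if h : k ≠ i then
          nx ⟨(k, i), h⟩ * eta ⟨(k, i), h⟩ + lx ⟨(k, i), h⟩ * eps ⟨(k, i), h⟩
        else 0) < 2 * α

/-- Directed Hausdorff "distance" between subsets of `C_γ`, w.r.t. `‖·‖_γ`. -/
def setDistG (γ : ℝ) {n : ℕ} (S T : Set (ℝ → NState n)) : ℝ :=
  sSup ((fun a => sInf ((fun b => gNorm γ (fun s => a s - b s)) '' T)) '' S)


lemma sigm_cont (ε : ℝ) : Continuous (sigm ε) := by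
  have h : ∀ s : ℝ, (1 : ℝ) + Real.exp (-s / ε) ≠ 0 := fun s => by positivity
  exact continuous_const.div (by fun_prop) h

lemma sigm_nonneg (ε s : ℝ) : 0 ≤ sigm ε s := by unfold sigm; positivity

lemma sigm_le_one (ε s : ℝ) : sigm ε s ≤ 1 := by
  unfold sigm
  rw [div_le_one (by positivity)]
  linarith [Real.exp_pos (-s / ε)]

lemma sigm_hasDeriv (ε : ℝ) (hε : 0 < ε) (s : ℝ) :
    HasDerivAt (sigm ε) ((Real.exp (-s / ε) / ε) / (1 + Real.exp (-s / ε)) ^ 2) s := by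
  have h0 : HasDerivAt (fun s : ℝ => -s / ε) (-1 / ε) s := by
    simpa using ((hasDerivAt_id s).neg.div_const ε)
  have h1 : HasDerivAt (fun s : ℝ => Real.exp (-s / ε)) (Real.exp (-s / ε) * (-1 / ε)) s :=
    (Real.hasDerivAt_exp _).comp s h0
  have h2 : HasDerivAt (fun s : ℝ => 1 + Real.exp (-s / ε)) (Real.exp (-s / ε) * (-1 / ε)) s :=
    h1.const_add 1
  have h3 := h2.inv (by positivity)
  have he : sigm ε = fun s => (1 + Real.exp (-s / ε))⁻¹ := by
    funext x; simp [sigm, one_div]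
  rw [he]
  refine h3.congr_deriv ?_
  ring

lemma sigm_lip (ε : ℝ) (hε : 0 < ε) (a b : ℝ) : |sigm ε a - sigm ε b| ≤ |a - b| / ε := by
  have hC : ∀ x ∈ (univ : Set ℝ),
      ‖(fun y : ℝ => (Real.exp (-y / ε) / ε) / (1 + Real.exp (-y / ε)) ^ 2) x‖ ≤ 1 / ε := by
    intro x _
    have he := Real.exp_pos (-x / ε)
    rw [Real.norm_eq_abs, abs_of_nonneg (by positivity)]
    have h1 : Real.exp (-x / ε) / (1 + Real.exp (-x / ε)) ^ 2 ≤ 1 := by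
      rw [div_le_one (by positivity)]; nlinarith
    calc Real.exp (-x / ε) / ε / (1 + Real.exp (-x / ε)) ^ 2
        = Real.exp (-x / ε) / (1 + Real.exp (-x / ε)) ^ 2 * (1 / ε) := by ring
      _ ≤ 1 * (1 / ε) := mul_le_mul_of_nonneg_right h1 (by positivity)
      _ = 1 / ε := one_mul _
  have := Convex.norm_image_sub_le_of_norm_hasDerivWithin_le
    (f := sigm ε) (s := univ)
    (fun x _ => (sigm_hasDeriv ε hε x).hasDerivWithinAt) hC convex_univ (mem_univ b) (mem_univ a)
  rw [Real.norm_eq_abs, Real.norm_eq_abs] at this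
  calc |sigm ε a - sigm ε b| ≤ 1 / ε * |a - b| := this
    _ = |a - b| / ε := by ring

lemma expInt (γ : ℝ) (ν : Measure ℝ)
    (hν : ∫⁻ τ in Iic (0 : ℝ), ENNReal.ofReal (Real.exp (-γ * τ)) ∂ν < ⊤) :
    IntegrableOn (fun τ => Real.exp (-γ * τ)) (Iic 0) ν := by
  refine ⟨(Real.continuous_exp.comp (continuous_const.mul continuous_id)).aestronglyMeasurable, ?_⟩
  rw [hasFiniteIntegral_iff_ofReal (ae_of_all _ fun τ => Real.exp_nonneg _)]
  exact hν

lemma expIntegralEq (γ : ℝ) (ν : Measure ℝ) :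
    ∫ τ in Iic (0 : ℝ), Real.exp (-γ * τ) ∂ν
      = (∫⁻ τ in Iic (0 : ℝ), ENNReal.ofReal (Real.exp (-γ * τ)) ∂ν).toReal :=
  integral_eq_lintegral_of_nonneg_ae (ae_of_all _ fun τ => Real.exp_nonneg _)
    (Real.continuous_exp.comp (continuous_const.mul continuous_id)).aestronglyMeasurable

lemma one_le_exp_neg (γ : ℝ) (hγ : 0 < γ) (τ : ℝ) (hτ : τ ≤ 0) : 1 ≤ Real.exp (-γ * τ) :=
  Real.one_le_exp (by nlinarith)

lemma sigInt (γ : ℝ) (hγ : 0 < γ) (ν : Measure ℝ)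
    (hν : ∫⁻ τ in Iic (0 : ℝ), ENNReal.ofReal (Real.exp (-γ * τ)) ∂ν < ⊤)
    (ε : ℝ) (f : ℝ → ℝ) (hf : ContinuousOn f (Iic 0)) :
    IntegrableOn (fun τ => sigm ε (f τ)) (Iic 0) ν := by
  refine (expInt γ ν hν).mono'
    (((sigm_cont ε).comp_continuousOn hf).aestronglyMeasurable measurableSet_Iic) ?_
  rw [ae_restrict_iff' measurableSet_Iic]
  filter_upwards with τ hτ
  rw [Real.norm_eq_abs, abs_of_nonneg (sigm_nonneg _ _)]
  exact le_trans (sigm_le_one _ _) (one_le_exp_neg γ hγ τ hτ)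

lemma sigIntAbsLe (γ : ℝ) (hγ : 0 < γ) (ν : Measure ℝ)
    (hν : ∫⁻ τ in Iic (0 : ℝ), ENNReal.ofReal (Real.exp (-γ * τ)) ∂ν < ⊤)
    (ε : ℝ) (f : ℝ → ℝ) (hf : ContinuousOn f (Iic 0)) :
    |∫ τ in Iic (0 : ℝ), sigm ε (f τ) ∂ν|
      ≤ (∫⁻ τ in Iic (0 : ℝ), ENNReal.ofReal (Real.exp (-γ * τ)) ∂ν).toReal := by
  rw [← expIntegralEq γ ν]
  calc |∫ τ in Iic (0 : ℝ), sigm ε (f τ) ∂ν| ≤ ∫ τ in Iic (0 : ℝ), |sigm ε (f τ)| ∂ν := by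
        simpa [Real.norm_eq_abs] using
          norm_integral_le_integral_norm (μ := ν.restrict (Iic 0)) (fun τ => sigm ε (f τ))
    _ ≤ ∫ τ in Iic (0 : ℝ), Real.exp (-γ * τ) ∂ν := by
        refine integral_mono_ae ((sigInt γ hγ ν hν ε f hf).abs) (expInt γ ν hν) ?_
        rw [Filter.EventuallyLE, ae_restrict_iff' measurableSet_Iic]
        filter_upwards with τ hτ
        rw [abs_of_nonneg (sigm_nonneg _ _)]
        exact le_trans (sigm_le_one _ _) (one_le_exp_neg γ hγ τ hτ)

lemma sigIntDiffLe (γ : ℝ) (hγ : 0 < γ) (ν : Measure ℝ)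
    (hν : ∫⁻ τ in Iic (0 : ℝ), ENNReal.ofReal (Real.exp (-γ * τ)) ∂ν < ⊤)
    (ε : ℝ) (hε : 0 < ε) (f g : ℝ → ℝ)
    (hf : ContinuousOn f (Iic 0)) (hg : ContinuousOn g (Iic 0))
    (δ : ℝ) (hfg : ∀ τ ≤ 0, |f τ - g τ| ≤ δ * Real.exp (-γ * τ)) :
    |(∫ τ in Iic (0 : ℝ), sigm ε (f τ) ∂ν) - ∫ τ in Iic (0 : ℝ), sigm ε (g τ) ∂ν|
      ≤ δ / ε * (∫⁻ τ in Iic (0 : ℝ), ENNReal.ofReal (Real.exp (-γ * τ)) ∂ν).toReal := by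
  rw [← integral_sub (sigInt γ hγ ν hν ε f hf) (sigInt γ hγ ν hν ε g hg)]
  rw [← expIntegralEq γ ν]
  calc |∫ τ in Iic (0 : ℝ), (sigm ε (f τ) - sigm ε (g τ)) ∂ν|
      ≤ ∫ τ in Iic (0 : ℝ), |sigm ε (f τ) - sigm ε (g τ)| ∂ν := by
        simpa [Real.norm_eq_abs] using
          norm_integral_le_integral_norm (μ := ν.restrict (Iic 0))
            (fun τ => sigm ε (f τ) - sigm ε (g τ))
    _ ≤ ∫ τ in Iic (0 : ℝ), δ / ε * Real.exp (-γ * τ) ∂ν := by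
        refine integral_mono_ae
          (((sigInt γ hγ ν hν ε f hf).sub (sigInt γ hγ ν hν ε g hg)).abs)
          ((expInt γ ν hν).const_mul _) ?_
        rw [Filter.EventuallyLE, ae_restrict_iff' measurableSet_Iic]
        filter_upwards with τ hτ
        calc |sigm ε (f τ) - sigm ε (g τ)| ≤ |f τ - g τ| / ε := sigm_lip ε hε _ _
          _ ≤ δ * Real.exp (-γ * τ) / ε := by gcongr; exact hfg τ hτ
          _ = δ / ε * Real.exp (-γ * τ) := by ring
    _ = δ / ε * ∫ τ in Iic (0 : ℝ), Real.exp (-γ * τ) ∂ν := integral_const_mul _ _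


lemma comp1_le {n : ℕ} (w : NState n) (k : Fin n) : |w.1 k| ≤ ‖w‖ :=
  le_trans (by simpa [Real.norm_eq_abs] using norm_le_pi_norm w.1 k) (norm_fst_le w)

lemma comp2_le {n : ℕ} (w : NState n) (p : IdxZ n) : |w.2 p| ≤ ‖w‖ :=
  le_trans (by simpa [Real.norm_eq_abs] using norm_le_pi_norm w.2 p) (norm_snd_le w)

lemma gnorm_ge {E : Type*} [NormedAddCommGroup E] [NormedSpace ℝ E] (γ : ℝ) (u v : ℝ → E)
    (hu : InC γ u) (hv : InC γ v) {τ : ℝ} (hτ : τ ≤ 0) :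
    Real.exp (γ * τ) * ‖v τ - u τ‖ ≤ gNorm γ (fun τ => v τ - u τ) := by
  obtain ⟨Cu, hCu⟩ := hu.2.2
  obtain ⟨Cv, hCv⟩ := hv.2.2
  have hbdd : BddAbove (range fun t : Iic (0 : ℝ) =>
      Real.exp (γ * t.1) * ‖(fun τ => v τ - u τ) t.1‖) := by
    refine ⟨Cv + Cu, ?_⟩
    rintro r ⟨σ, rfl⟩
    have h1 : Real.exp (γ * σ.1) * ‖v σ.1‖ ≤ Cv := hCv (Set.mem_range_self σ)
    have h2 : Real.exp (γ * σ.1) * ‖u σ.1‖ ≤ Cu := hCu (Set.mem_range_self σ)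
    calc Real.exp (γ * σ.1) * ‖(fun τ => v τ - u τ) σ.1‖
        ≤ Real.exp (γ * σ.1) * (‖v σ.1‖ + ‖u σ.1‖) :=
          mul_le_mul_of_nonneg_left (norm_sub_le _ _) (Real.exp_nonneg _)
      _ = Real.exp (γ * σ.1) * ‖v σ.1‖ + Real.exp (γ * σ.1) * ‖u σ.1‖ := mul_add _ _ _
      _ ≤ Cv + Cu := add_le_add h1 h2
  show Real.exp (γ * τ) * ‖v τ - u τ‖ ≤ ⨆ t : Iic (0 : ℝ),
      Real.exp (γ * t.1) * ‖(fun τ => v τ - u τ) t.1‖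
  exact le_ciSup hbdd (⟨τ, hτ⟩ : Iic (0 : ℝ))

/-- continuity of `f_ε` on `ℝ × C_γ` (ε-δ formulation of continuity
with respect to the product of the standard topology on `ℝ` and the `‖·‖_γ`-topology). -/
theorem stmt1 {n : ℕ} (hn : 2 ≤ n) (γ α : ℝ) (hγ : 0 < γ)
    (A : Fin n → ℝ → ℝ) (B : IdxZ n → ℝ → ℝ) (μ : IdxZ n → Measure ℝ)
    (c d : IdxZ n → ℝ) (Γ : Fin n → ℝ) (Istim : Fin n → ℝ → ℝ)
    (hD : HypD α A B) (hM : HypM γ μ) (hI : HypI Istim)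
    (hc : ∀ p, 0 ≤ c p) (hd : ∀ p, 0 ≤ d p)
    (ε : ℝ) (hε : 0 < ε) (t : ℝ) (u : ℝ → NState n) (hu : InC γ u)
    (η : ℝ) (hη : 0 < η) :
    ∃ δ > 0, ∀ s : ℝ, ∀ v : ℝ → NState n, InC γ v →
      |s - t| < δ → gNorm γ (fun τ => v τ - u τ) < δ →
      ‖fEps ε A B μ c d Γ Istim s v - fEps ε A B μ c d Γ Istim t u‖ < η := by
  classical
  obtain ⟨hα, hA, hB⟩ := hD
  have hη3 : 0 < η / 3 := by positivity
  obtain ⟨M, hMdef⟩ : ∃ M : IdxZ n → ℝ, M =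
      fun p => (∫⁻ τ in Iic (0 : ℝ), ENNReal.ofReal (Real.exp (-γ * τ)) ∂(μ p)).toReal :=
    ⟨_, rfl⟩
  have hM0 : ∀ p, 0 ≤ M p := fun p => by rw [hMdef]; exact ENNReal.toReal_nonneg
  obtain ⟨C1, hC1def⟩ : ∃ C1 : IdxZ n → ℝ,
      C1 = fun p => M p + |(u 0).2 p - c p| * (M p / ε) := ⟨_, rfl⟩
  obtain ⟨C2, hC2def⟩ : ∃ C2 : IdxZ n → ℝ,
      C2 = fun p => d p * (M p / ε * (|(u 0).1 p.1.2| + 1) + M p) := ⟨_, rfl⟩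
  have hC1n : ∀ p, 0 ≤ C1 p := fun p => by
    rw [hC1def]
    exact add_nonneg (hM0 p) (mul_nonneg (abs_nonneg _) (div_nonneg (hM0 p) hε.le))
  have hC2n : ∀ p, 0 ≤ C2 p := fun p => by
    rw [hC2def]
    exact mul_nonneg (hd p) (add_nonneg
      (mul_nonneg (div_nonneg (hM0 p) hε.le) (by positivity)) (hM0 p))
  obtain ⟨S1, hS1def⟩ : ∃ S1 : ℝ,
      S1 = ∑ i : Fin n, ∑ k : Fin n, (if h : k ≠ i then C1 ⟨(k, i), h⟩ else 0) := ⟨_, rfl⟩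
  obtain ⟨S2, hS2def⟩ : ∃ S2 : ℝ, S2 = ∑ p : IdxZ n, C2 p := ⟨_, rfl⟩
  have hinn : ∀ i : Fin n, 0 ≤ ∑ k : Fin n, (if h : k ≠ i then C1 ⟨(k, i), h⟩ else 0) := by
    intro i
    refine Finset.sum_nonneg fun k _ => ?_
    by_cases h : k ≠ i
    · simpa [h] using hC1n ⟨(k, i), h⟩
    · simp [h]
  have hS1n : 0 ≤ S1 := by rw [hS1def]; exact Finset.sum_nonneg fun i _ => hinn i
  have hS2n : 0 ≤ S2 := by rw [hS2def]; exact Finset.sum_nonneg fun p _ => hC2n p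
  obtain ⟨K, hKdef⟩ : ∃ K : ℝ, K = 1 + S1 + S2 := ⟨_, rfl⟩
  have hK0 : 0 < K := by rw [hKdef]; linarith
  -- continuity-based δ's
  have hFAc : Continuous (fun x : Fin n → ℝ => fun i => -A i (x i) * x i) :=
    continuous_pi fun i => (((hA i).1.continuous.comp (continuous_apply i)).neg.mul
      (continuous_apply i))
  have hFBc : Continuous (fun z : IdxZ n → ℝ => fun p => -B p (z p) * z p) :=
    continuous_pi fun p => (((hB p).1.continuous.comp (continuous_apply p)).neg.mul
      (continuous_apply p))
  have hFIc : Continuous (fun s : ℝ => fun i : Fin n => Istim i s) :=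
    continuous_pi fun i => hI i
  obtain ⟨δA, hδA0, hδA⟩ :=
    Metric.continuousAt_iff.mp (hFAc.continuousAt (x := (u 0).1)) (η / 3) hη3
  obtain ⟨δB, hδB0, hδB⟩ :=
    Metric.continuousAt_iff.mp (hFBc.continuousAt (x := (u 0).2)) (η / 3) hη3
  obtain ⟨δI, hδI0, hδI⟩ :=
    Metric.continuousAt_iff.mp (hFIc.continuousAt (x := t)) (η / 3) hη3
  obtain ⟨δ0, hδ0def⟩ : ∃ δ0 : ℝ, δ0 = min δI (min δA (min δB (min 1 (η / (3 * K))))) :=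
    ⟨_, rfl⟩
  have hδ0pos : 0 < δ0 := by
    rw [hδ0def]
    exact lt_min hδI0 (lt_min hδA0 (lt_min hδB0 (lt_min one_pos (by positivity))))
  have hδ0n : 0 ≤ δ0 := hδ0pos.le
  have hδ0I : δ0 ≤ δI := by rw [hδ0def]; exact min_le_left _ _
  have hδ0A : δ0 ≤ δA := by
    rw [hδ0def]; exact le_trans (min_le_right _ _) (min_le_left _ _)
  have hδ0B : δ0 ≤ δB := by
    rw [hδ0def]
    exact le_trans (min_le_right _ _) (le_trans (min_le_right _ _) (min_le_left _ _))
  have hδ01 : δ0 ≤ 1 := by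
    rw [hδ0def]
    exact le_trans (min_le_right _ _)
      (le_trans (min_le_right _ _) (le_trans (min_le_right _ _) (min_le_left _ _)))
  have hδ0K : δ0 ≤ η / (3 * K) := by
    rw [hδ0def]
    exact le_trans (min_le_right _ _)
      (le_trans (min_le_right _ _) (le_trans (min_le_right _ _) (min_le_right _ _)))
  have hδK3 : δ0 * K ≤ η / 3 := by
    calc δ0 * K ≤ η / (3 * K) * K := mul_le_mul_of_nonneg_right hδ0K hK0.le
      _ = η / 3 := by field_simp
  refine ⟨δ0, hδ0pos, ?_⟩
  intro s v hv hst hvu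
  -- basic distance bounds
  have hb : ∀ τ ≤ (0 : ℝ), ‖v τ - u τ‖ ≤ δ0 * Real.exp (-γ * τ) := by
    intro τ hτ
    have h2 : Real.exp (γ * τ) * ‖v τ - u τ‖ < δ0 :=
      lt_of_le_of_lt (gnorm_ge γ u v hu hv hτ) hvu
    have hexp : Real.exp (-γ * τ) * Real.exp (γ * τ) = 1 := by
      rw [← Real.exp_add, show -γ * τ + γ * τ = 0 by ring, Real.exp_zero]
    calc ‖v τ - u τ‖ = Real.exp (-γ * τ) * Real.exp (γ * τ) * ‖v τ - u τ‖ := by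
          rw [hexp, one_mul]
      _ = Real.exp (-γ * τ) * (Real.exp (γ * τ) * ‖v τ - u τ‖) := by ring
      _ ≤ Real.exp (-γ * τ) * δ0 :=
          mul_le_mul_of_nonneg_left h2.le (Real.exp_nonneg _)
      _ = δ0 * Real.exp (-γ * τ) := mul_comm _ _
  have h00 : ‖v 0 - u 0‖ < δ0 := by
    have := lt_of_le_of_lt (gnorm_ge γ u v hu hv le_rfl) hvu
    simpa using this
  have hx0d : ∀ k : Fin n, |(v 0).1 k - (u 0).1 k| ≤ δ0 := by
    intro k
    have h1 : |(v 0 - u 0).1 k| ≤ ‖v 0 - u 0‖ := comp1_le _ k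
    simpa [Prod.fst_sub, Pi.sub_apply] using le_trans h1 h00.le
  have hz0d : ∀ p : IdxZ n, |(v 0).2 p - (u 0).2 p| ≤ δ0 := by
    intro p
    have h1 : |(v 0 - u 0).2 p| ≤ ‖v 0 - u 0‖ := comp2_le _ p
    simpa [Prod.snd_sub, Pi.sub_apply] using le_trans h1 h00.le
  -- decay and stimulus estimates
  have hdecA : ∀ i : Fin n,
      |(-A i ((v 0).1 i) * (v 0).1 i) - (-A i ((u 0).1 i) * (u 0).1 i)| < η / 3 := by
    intro i
    have hdist : dist ((v 0).1) ((u 0).1) < δA := by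
      rw [dist_eq_norm]
      calc ‖(v 0).1 - (u 0).1‖ = ‖(v 0 - u 0).1‖ := by rw [Prod.fst_sub]
        _ ≤ ‖v 0 - u 0‖ := norm_fst_le _
        _ < δA := lt_of_lt_of_le h00 hδ0A
    have hda := hδA hdist
    calc |(-A i ((v 0).1 i) * (v 0).1 i) - (-A i ((u 0).1 i) * (u 0).1 i)|
        = dist (-A i ((v 0).1 i) * (v 0).1 i) (-A i ((u 0).1 i) * (u 0).1 i) :=
          (Real.dist_eq _ _).symm
      _ ≤ dist (fun i => -A i ((v 0).1 i) * (v 0).1 i)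
            (fun i => -A i ((u 0).1 i) * (u 0).1 i) :=
          dist_le_pi_dist (fun i => -A i ((v 0).1 i) * (v 0).1 i)
            (fun i => -A i ((u 0).1 i) * (u 0).1 i) i
      _ < η / 3 := hda
  have hdecB : ∀ p : IdxZ n,
      |(-B p ((v 0).2 p) * (v 0).2 p) - (-B p ((u 0).2 p) * (u 0).2 p)| < η / 3 := by
    intro p
    have hdist : dist ((v 0).2) ((u 0).2) < δB := by
      rw [dist_eq_norm]
      calc ‖(v 0).2 - (u 0).2‖ = ‖(v 0 - u 0).2‖ := by rw [Prod.snd_sub]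
        _ ≤ ‖v 0 - u 0‖ := norm_snd_le _
        _ < δB := lt_of_lt_of_le h00 hδ0B
    have hdb := hδB hdist
    calc |(-B p ((v 0).2 p) * (v 0).2 p) - (-B p ((u 0).2 p) * (u 0).2 p)|
        = dist (-B p ((v 0).2 p) * (v 0).2 p) (-B p ((u 0).2 p) * (u 0).2 p) :=
          (Real.dist_eq _ _).symm
      _ ≤ dist (fun p => -B p ((v 0).2 p) * (v 0).2 p)
            (fun p => -B p ((u 0).2 p) * (u 0).2 p) :=
          dist_le_pi_dist (fun p => -B p ((v 0).2 p) * (v 0).2 p)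
            (fun p => -B p ((u 0).2 p) * (u 0).2 p) p
      _ < η / 3 := hdb
  have hstim : ∀ i : Fin n, |Istim i s - Istim i t| < η / 3 := by
    intro i
    have hdist : dist s t < δI := by
      rw [Real.dist_eq]; exact lt_of_lt_of_le hst hδ0I
    have hdi := hδI hdist
    calc |Istim i s - Istim i t|
        = dist (Istim i s) (Istim i t) := (Real.dist_eq _ _).symm
      _ ≤ dist (fun i : Fin n => Istim i s) (fun i : Fin n => Istim i t) :=
          dist_le_pi_dist (fun i : Fin n => Istim i s) (fun i : Fin n => Istim i t) i
      _ < η / 3 := hdi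
  -- integral estimates
  have hcont : ∀ (w : ℝ → NState n), InC γ w → ∀ k : Fin n,
      ContinuousOn (fun τ => (w τ).1 k - Γ k) (Iic 0) := by
    intro w hw k
    exact (((continuous_apply k).comp continuous_fst).comp_continuousOn hw.1).sub
      continuousOn_const
  have hcomp : ∀ k : Fin n, ∀ τ ≤ (0 : ℝ),
      |((v τ).1 k - Γ k) - ((u τ).1 k - Γ k)| ≤ δ0 * Real.exp (-γ * τ) := by
    intro k τ hτ
    have h1 : |(v τ - u τ).1 k| ≤ ‖v τ - u τ‖ := comp1_le _ k
    have h2 : |(v τ).1 k - (u τ).1 k| ≤ ‖v τ - u τ‖ := by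
      simpa [Prod.fst_sub, Pi.sub_apply] using h1
    calc |((v τ).1 k - Γ k) - ((u τ).1 k - Γ k)| = |(v τ).1 k - (u τ).1 k| := by ring_nf
      _ ≤ ‖v τ - u τ‖ := h2
      _ ≤ δ0 * Real.exp (-γ * τ) := hb τ hτ
  have hJd : ∀ (k : Fin n) (p : IdxZ n),
      |(∫ τ in Iic (0 : ℝ), sigm ε ((v τ).1 k - Γ k) ∂(μ p)) -
        ∫ τ in Iic (0 : ℝ), sigm ε ((u τ).1 k - Γ k) ∂(μ p)| ≤ δ0 / ε * M p :=
    fun k p => by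
      simp only [hMdef]
      exact sigIntDiffLe γ hγ (μ p) (hM p) ε hε _ _ (hcont v hv k) (hcont u hu k)
        δ0 (hcomp k)
  have hJv : ∀ (k : Fin n) (p : IdxZ n),
      |∫ τ in Iic (0 : ℝ), sigm ε ((v τ).1 k - Γ k) ∂(μ p)| ≤ M p :=
    fun k p => by simp only [hMdef]; exact sigIntAbsLe γ hγ (μ p) (hM p) ε _ (hcont v hv k)
  have hJu : ∀ (k : Fin n) (p : IdxZ n),
      |∫ τ in Iic (0 : ℝ), sigm ε ((u τ).1 k - Γ k) ∂(μ p)| ≤ M p :=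
    fun k p => by simp only [hMdef]; exact sigIntAbsLe γ hγ (μ p) (hM p) ε _ (hcont u hu k)
  -- pairwise bound for the first components of the sigmoidal term
  have hpair : ∀ (p : IdxZ n) (k : Fin n),
      |((v 0).2 p - c p) * (∫ τ in Iic (0 : ℝ), sigm ε ((v τ).1 k - Γ k) ∂(μ p)) -
        ((u 0).2 p - c p) * ∫ τ in Iic (0 : ℝ), sigm ε ((u τ).1 k - Γ k) ∂(μ p)|
        ≤ δ0 * C1 p := by
    intro p k
    have e1 : ((v 0).2 p - c p) * (∫ τ in Iic (0 : ℝ), sigm ε ((v τ).1 k - Γ k) ∂(μ p)) -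
        ((u 0).2 p - c p) * ∫ τ in Iic (0 : ℝ), sigm ε ((u τ).1 k - Γ k) ∂(μ p)
        = ((v 0).2 p - (u 0).2 p) * (∫ τ in Iic (0 : ℝ), sigm ε ((v τ).1 k - Γ k) ∂(μ p)) +
          ((u 0).2 p - c p) *
            ((∫ τ in Iic (0 : ℝ), sigm ε ((v τ).1 k - Γ k) ∂(μ p)) -
              ∫ τ in Iic (0 : ℝ), sigm ε ((u τ).1 k - Γ k) ∂(μ p)) := by ring
    rw [e1]
    calc _ ≤ |((v 0).2 p - (u 0).2 p) *
            ∫ τ in Iic (0 : ℝ), sigm ε ((v τ).1 k - Γ k) ∂(μ p)| +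
          |((u 0).2 p - c p) *
            ((∫ τ in Iic (0 : ℝ), sigm ε ((v τ).1 k - Γ k) ∂(μ p)) -
              ∫ τ in Iic (0 : ℝ), sigm ε ((u τ).1 k - Γ k) ∂(μ p))| := abs_add_le _ _
      _ = |(v 0).2 p - (u 0).2 p| *
            |∫ τ in Iic (0 : ℝ), sigm ε ((v τ).1 k - Γ k) ∂(μ p)| +
          |(u 0).2 p - c p| *
            |(∫ τ in Iic (0 : ℝ), sigm ε ((v τ).1 k - Γ k) ∂(μ p)) -
              ∫ τ in Iic (0 : ℝ), sigm ε ((u τ).1 k - Γ k) ∂(μ p)| := by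
          rw [abs_mul, abs_mul]
      _ ≤ δ0 * M p + |(u 0).2 p - c p| * (δ0 / ε * M p) :=
          add_le_add (mul_le_mul (hz0d p) (hJv k p) (abs_nonneg _) hδ0n)
            (mul_le_mul_of_nonneg_left (hJd k p) (abs_nonneg _))
      _ = δ0 * C1 p := by simp only [hC1def]; ring
  -- bound for the second components of the sigmoidal term
  have hsig2 : ∀ p : IdxZ n,
      |d p * (∫ τ in Iic (0 : ℝ), sigm ε ((v τ).1 p.1.1 - Γ p.1.1) ∂(μ p)) *
          max ((v 0).1 p.1.2) 0 -
        d p * (∫ τ in Iic (0 : ℝ), sigm ε ((u τ).1 p.1.1 - Γ p.1.1) ∂(μ p)) *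
          max ((u 0).1 p.1.2) 0| ≤ δ0 * C2 p := by
    intro p
    set Jv' := ∫ τ in Iic (0 : ℝ), sigm ε ((v τ).1 p.1.1 - Γ p.1.1) ∂(μ p) with hJv'
    set Ju' := ∫ τ in Iic (0 : ℝ), sigm ε ((u τ).1 p.1.1 - Γ p.1.1) ∂(μ p) with hJu'
    set av := max ((v 0).1 p.1.2) 0 with hav
    set au := max ((u 0).1 p.1.2) 0 with hau
    have hav0 : 0 ≤ av := le_max_right _ _
    have havle : av ≤ |(u 0).1 p.1.2| + 1 := by
      have h1 : av ≤ |(v 0).1 p.1.2| := max_le (le_abs_self _) (abs_nonneg _)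
      have h2 : |(v 0).1 p.1.2| - |(u 0).1 p.1.2| ≤ |(v 0).1 p.1.2 - (u 0).1 p.1.2| :=
        abs_sub_abs_le_abs_sub _ _
      have h3 := hx0d p.1.2
      linarith [hδ01]
    have havau : |av - au| ≤ δ0 :=
      le_trans (abs_max_sub_max_le_abs _ _ _) (hx0d p.1.2)
    have e1 : d p * Jv' * av - d p * Ju' * au
        = d p * ((Jv' - Ju') * av + Ju' * (av - au)) := by ring
    rw [e1, abs_mul, abs_of_nonneg (hd p)]
    have hδεM : (0 : ℝ) ≤ δ0 / ε * M p :=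
      mul_nonneg (div_nonneg hδ0n hε.le) (hM0 p)
    calc d p * |(Jv' - Ju') * av + Ju' * (av - au)|
        ≤ d p * (|(Jv' - Ju') * av| + |Ju' * (av - au)|) :=
          mul_le_mul_of_nonneg_left (abs_add_le _ _) (hd p)
      _ = d p * (|Jv' - Ju'| * av + |Ju'| * |av - au|) := by
          rw [abs_mul, abs_mul, abs_of_nonneg hav0]
      _ ≤ d p * ((δ0 / ε * M p) * (|(u 0).1 p.1.2| + 1) + M p * δ0) := by
          refine mul_le_mul_of_nonneg_left (add_le_add
            (mul_le_mul (hJd p.1.1 p) havle hav0 hδεM)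
            (mul_le_mul (hJu p.1.1 p) havau (abs_nonneg _) (hM0 p))) (hd p)
      _ = δ0 * C2 p := by simp only [hC2def]; ring
  -- combination helpers
  have habc : ∀ a b e : ℝ, |a| < η / 3 → |b| ≤ δ0 * K → |e| < η / 3 → |a + b + e| < η := by
    intro a b e h1 h2 h3
    have h4 : |a + b + e| ≤ |a + b| + |e| := abs_add_le _ _
    have h5 : |a + b| ≤ |a| + |b| := abs_add_le _ _
    linarith [hδK3]
  have hab : ∀ a b : ℝ, |a| < η / 3 → |b| ≤ δ0 * K → |a + b| < η := by
    intro a b h1 h2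
    have h5 : |a + b| ≤ |a| + |b| := abs_add_le _ _
    have : (0:ℝ) < η / 3 := hη3
    linarith [hδK3]
  -- reduce to components
  rw [Prod.norm_def, sup_lt_iff]
  constructor
  · rw [pi_norm_lt_iff hη]
    intro i
    rw [Real.norm_eq_abs]
    have hre : (fEps ε A B μ c d Γ Istim s v - fEps ε A B μ c d Γ Istim t u).1 i
        = ((-A i ((v 0).1 i) * (v 0).1 i) - (-A i ((u 0).1 i) * (u 0).1 i))
          + ((∑ k : Fin n, if h : k ≠ i then
              ((v 0).2 ⟨(k, i), h⟩ - c ⟨(k, i), h⟩) *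
                ∫ τ in Iic (0 : ℝ), sigm ε ((v τ).1 k - Γ k) ∂(μ ⟨(k, i), h⟩)
            else 0) -
            (∑ k : Fin n, if h : k ≠ i then
              ((u 0).2 ⟨(k, i), h⟩ - c ⟨(k, i), h⟩) *
                ∫ τ in Iic (0 : ℝ), sigm ε ((u τ).1 k - Γ k) ∂(μ ⟨(k, i), h⟩)
            else 0))
          + (Istim i s - Istim i t) := by
      simp only [fEps, decayT, sigTerm, stimT, Prod.fst_sub, Prod.fst_add,
        Pi.sub_apply, Pi.add_apply]
      ring
    rw [hre]
    refine habc _ _ _ (hdecA i) ?_ (hstim i)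
    rw [← Finset.sum_sub_distrib]
    calc |∑ k : Fin n, ((if h : k ≠ i then
            ((v 0).2 ⟨(k, i), h⟩ - c ⟨(k, i), h⟩) *
              ∫ τ in Iic (0 : ℝ), sigm ε ((v τ).1 k - Γ k) ∂(μ ⟨(k, i), h⟩)
          else 0) -
          (if h : k ≠ i then
            ((u 0).2 ⟨(k, i), h⟩ - c ⟨(k, i), h⟩) *
              ∫ τ in Iic (0 : ℝ), sigm ε ((u τ).1 k - Γ k) ∂(μ ⟨(k, i), h⟩)
          else 0))|
        ≤ ∑ k : Fin n, |(if h : k ≠ i then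
            ((v 0).2 ⟨(k, i), h⟩ - c ⟨(k, i), h⟩) *
              ∫ τ in Iic (0 : ℝ), sigm ε ((v τ).1 k - Γ k) ∂(μ ⟨(k, i), h⟩)
          else 0) -
          (if h : k ≠ i then
            ((u 0).2 ⟨(k, i), h⟩ - c ⟨(k, i), h⟩) *
              ∫ τ in Iic (0 : ℝ), sigm ε ((u τ).1 k - Γ k) ∂(μ ⟨(k, i), h⟩)
          else 0)| := Finset.abs_sum_le_sum_abs _ _
      _ ≤ ∑ k : Fin n, (if h : k ≠ i then δ0 * C1 ⟨(k, i), h⟩ else 0) := by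
          refine Finset.sum_le_sum fun k _ => ?_
          by_cases h : k ≠ i
          · simp only [dif_pos h]
            exact hpair ⟨(k, i), h⟩ k
          · simp [h]
      _ = δ0 * ∑ k : Fin n, (if h : k ≠ i then C1 ⟨(k, i), h⟩ else 0) := by
          rw [Finset.mul_sum]
          refine Finset.sum_congr rfl fun k _ => ?_
          split <;> simp
      _ ≤ δ0 * K := by
          refine mul_le_mul_of_nonneg_left ?_ hδ0n
          have h1 : (∑ k : Fin n, if h : k ≠ i then C1 ⟨(k, i), h⟩ else 0) ≤ S1 := by
            rw [hS1def]
            exact Finset.single_le_sum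
              (f := fun j : Fin n => ∑ k : Fin n, (if h : k ≠ j then C1 ⟨(k, j), h⟩ else 0))
              (fun j _ => hinn j) (Finset.mem_univ i)
          rw [hKdef]
          linarith
  · rw [pi_norm_lt_iff hη]
    intro p
    rw [Real.norm_eq_abs]
    have hre : (fEps ε A B μ c d Γ Istim s v - fEps ε A B μ c d Γ Istim t u).2 p
        = ((-B p ((v 0).2 p) * (v 0).2 p) - (-B p ((u 0).2 p) * (u 0).2 p))
          + (d p * (∫ τ in Iic (0 : ℝ), sigm ε ((v τ).1 p.1.1 - Γ p.1.1) ∂(μ p)) *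
              max ((v 0).1 p.1.2) 0 -
            d p * (∫ τ in Iic (0 : ℝ), sigm ε ((u τ).1 p.1.1 - Γ p.1.1) ∂(μ p)) *
              max ((u 0).1 p.1.2) 0) := by
      simp only [fEps, decayT, sigTerm, stimT, Prod.snd_sub, Prod.snd_add,
        Pi.sub_apply, Pi.add_apply, Pi.zero_apply]
      ring
    rw [hre]
    refine hab _ _ (hdecB p) ?_
    calc _ ≤ δ0 * C2 p := hsig2 p
      _ ≤ δ0 * K := by
          refine mul_le_mul_of_nonneg_left ?_ hδ0n
          have h1 : C2 p ≤ S2 := by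
            rw [hS2def]
            exact Finset.single_le_sum (fun q _ => hC2n q) (Finset.mem_univ p)
          rw [hKdef]
          linarith

end
end

section
/- Assume hypotheses (D), (M), (I). Fix a compact interval [a,b]⊂ℝ, r>0, and T>0. Then there exist k₁,k₂>0 such that for every ε>0, every t₀∈[a,b], and every solution u:(−∞,t₀+T)→ℝ^{n²} of the sigmoidal system u'(t)=f_ε(t,u_t) on [t₀,t₀+T) with ‖u_{t₀}‖_γ ≤ r, one has ‖u_t‖_γ ≤ k₁ e^{k₂(t−t₀)} for all t∈[t₀,t₀+T); the constants k₁,k₂ are independent of ε. -/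
open MeasureTheory Set Filter Topology Pointwise

noncomputable section

/-! ### Auxiliary lemmas for stmt6 -/

lemma sigm_abs_le_one (ε s : ℝ) : |sigm ε s| ≤ 1 := by
  have h : (0:ℝ) < 1 + Real.exp (-s / ε) := by positivity
  rw [sigm, abs_div, abs_one, abs_of_pos h, div_le_one h]
  linarith [Real.exp_pos (-s / ε)]

lemma abs_setIntegral_sigm_le (ε : ℝ) (w : ℝ → ℝ) (ν : Measure ℝ) (hν : ν (Iic 0) ≠ ⊤) :
    |∫ τ in Iic (0:ℝ), sigm ε (w τ) ∂ν| ≤ (ν (Iic 0)).toReal := by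
  have : IsFiniteMeasure (ν.restrict (Iic 0)) :=
    ⟨by rwa [Measure.restrict_apply_univ, lt_top_iff_ne_top]⟩
  have h := norm_integral_le_of_norm_le_const (μ := ν.restrict (Iic 0))
    (f := fun τ => sigm ε (w τ)) (C := 1)
    (Filter.Eventually.of_forall fun τ => by
      simpa [Real.norm_eq_abs] using sigm_abs_le_one ε (w τ))
  simpa [Real.norm_eq_abs, Measure.restrict_apply_univ, Measure.real] using h

lemma pi_normSq_le_sum {ι : Type*} [Fintype ι] (w : ι → ℝ) : ‖w‖ ^ 2 ≤ ∑ i, (w i) ^ 2 := by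
  have h0 : (0:ℝ) ≤ ∑ i, (w i) ^ 2 := Finset.sum_nonneg fun i _ => sq_nonneg _
  have h : ‖w‖ ≤ Real.sqrt (∑ i, (w i) ^ 2) := by
    rw [pi_norm_le_iff_of_nonneg (Real.sqrt_nonneg _)]
    intro i
    rw [Real.norm_eq_abs, ← Real.sqrt_sq_eq_abs]
    exact Real.sqrt_le_sqrt (Finset.single_le_sum (fun j _ => sq_nonneg (w j)) (Finset.mem_univ i))
  calc ‖w‖ ^ 2 ≤ Real.sqrt (∑ i, (w i) ^ 2) ^ 2 := pow_le_pow_left₀ (norm_nonneg _) h 2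
    _ = _ := Real.sq_sqrt h0

lemma nstate_normSq_le {n : ℕ} (v : NState n) :
    ‖v‖ ^ 2 ≤ ∑ i, (v.1 i) ^ 2 + ∑ p, (v.2 p) ^ 2 := by
  have h1 := pi_normSq_le_sum v.1
  have h2 := pi_normSq_le_sum v.2
  have h0x : (0:ℝ) ≤ ∑ i, (v.1 i) ^ 2 := Finset.sum_nonneg fun i _ => sq_nonneg _
  have h0z : (0:ℝ) ≤ ∑ p, (v.2 p) ^ 2 := Finset.sum_nonneg fun p _ => sq_nonneg _
  rw [Prod.norm_def]
  rcases le_total ‖v.1‖ ‖v.2‖ with h | h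
  · rw [max_eq_right h]; linarith
  · rw [max_eq_left h]; linarith

lemma hasDerivAt_fst_apply {n : ℕ} {u : ℝ → NState n} {f : NState n} {t : ℝ}
    (h : HasDerivAt u f t) (i : Fin n) :
    HasDerivAt (fun τ => (u τ).1 i) (f.1 i) t :=
  ((ContinuousLinearMap.proj i).comp
    (ContinuousLinearMap.fst ℝ (Fin n → ℝ) (IdxZ n → ℝ))).hasFDerivAt.comp_hasDerivAt t h

lemma hasDerivAt_snd_apply {n : ℕ} {u : ℝ → NState n} {f : NState n} {t : ℝ}
    (h : HasDerivAt u f t) (p : IdxZ n) :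
    HasDerivAt (fun τ => (u τ).2 p) (f.2 p) t :=
  ((ContinuousLinearMap.proj p).comp
    (ContinuousLinearMap.snd ℝ (Fin n → ℝ) (IdxZ n → ℝ))).hasFDerivAt.comp_hasDerivAt t h

set_option maxHeartbeats 4000000 in
/-- a priori exponential bound on solutions of the sigmoidal system,
with constants independent of `ε`. -/
theorem stmt6 {n : ℕ} (hn : 2 ≤ n) (γ α : ℝ) (hγ : 0 < γ)
    (A : Fin n → ℝ → ℝ) (B : IdxZ n → ℝ → ℝ) (μ : IdxZ n → Measure ℝ)
    (c d : IdxZ n → ℝ) (Γ : Fin n → ℝ) (Istim : Fin n → ℝ → ℝ)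
    (hD : HypD α A B) (hM : HypM γ μ) (hI : HypI Istim)
    (hc : ∀ p, 0 ≤ c p) (hd : ∀ p, 0 ≤ d p)
    (a b r T : ℝ) (hab : a ≤ b) (hr : 0 < r) (hT : 0 < T) :
    ∃ k₁ > 0, ∃ k₂ > 0, ∀ ε > (0 : ℝ), ∀ t₀ ∈ Icc a b, ∀ u₀ u : ℝ → NState n,
      InC γ u₀ → gNorm γ u₀ ≤ r →
      IsSigSolOn ε A B μ c d Γ Istim t₀ (t₀ + T) u₀ u →
      ∀ t ∈ Ico t₀ (t₀ + T), gNorm γ (hist u t) ≤ k₁ * Real.exp (k₂ * (t - t₀)) := by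
  obtain ⟨hα, hA, hB⟩ := hD
  -- finiteness of the measures on `(-∞,0]`
  have hfin : ∀ p : IdxZ n, μ p (Iic 0) ≠ ⊤ := by
    intro p
    have hle : μ p (Iic 0) ≤ ∫⁻ s in Iic (0:ℝ), ENNReal.ofReal (Real.exp (-γ * s)) ∂(μ p) := by
      rw [← setLIntegral_one]
      refine setLIntegral_mono
        ((Real.measurable_exp.comp (measurable_const.mul measurable_id)).ennreal_ofReal) ?_
      intro s hs
      refine ENNReal.one_le_ofReal.mpr (Real.one_le_exp ?_)
      have hs0 : s ≤ 0 := hs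
      nlinarith
    exact (lt_of_le_of_lt hle (hM p)).ne
  -- constants
  set mB : ℝ := ∑ p : IdxZ n, mTot μ p with hmBdef
  have hm0 : ∀ p, 0 ≤ mTot μ p := fun p => ENNReal.toReal_nonneg
  clear_value mB
  have hmB : ∀ p, mTot μ p ≤ mB := by
    intro p; rw [hmBdef]
    exact Finset.single_le_sum (fun q _ => hm0 q) (Finset.mem_univ p)
  have hmB0 : 0 ≤ mB := by
    rw [hmBdef]; exact Finset.sum_nonneg fun q _ => hm0 q
  set cB : ℝ := ∑ p : IdxZ n, c p with hcBdef
  clear_value cB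
  have hcB : ∀ p, c p ≤ cB := by
    intro p; rw [hcBdef]
    exact Finset.single_le_sum (fun q _ => hc q) (Finset.mem_univ p)
  have hcB0 : 0 ≤ cB := by
    rw [hcBdef]; exact Finset.sum_nonneg fun q _ => hc q
  set dB : ℝ := ∑ p : IdxZ n, d p with hdBdef
  clear_value dB
  have hdB : ∀ p, d p ≤ dB := by
    intro p; rw [hdBdef]
    exact Finset.single_le_sum (fun q _ => hd q) (Finset.mem_univ p)
  have hdB0 : 0 ≤ dB := by
    rw [hdBdef]; exact Finset.sum_nonneg fun q _ => hd q
  -- stimulus bound on the compact interval `[a, b+T]`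
  choose CI hCI using fun i : Fin n =>
    (isCompact_Icc (a := a) (b := b + T)).exists_bound_of_continuousOn (hI i).continuousOn
  set M : ℝ := ∑ i : Fin n, |CI i| with hMdef
  clear_value M
  have hM0 : 0 ≤ M := by
    rw [hMdef]; exact Finset.sum_nonneg fun i _ => abs_nonneg _
  have hIb : ∀ i, ∀ s ∈ Icc a (b + T), |Istim i s| ≤ M := by
    intro i s hs
    calc |Istim i s| ≤ CI i := by simpa [Real.norm_eq_abs] using hCI i s hs
      _ ≤ |CI i| := le_abs_self _
      _ ≤ M := by
        rw [hMdef]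
        exact Finset.single_le_sum (f := fun j => |CI j|) (fun j _ => abs_nonneg _)
          (Finset.mem_univ i)
  set Np : ℕ := Fintype.card (IdxZ n) with hNpdef
  clear_value Np
  set P1 : ℝ := 2 * n * n * mB + 2 * Np * dB * mB with hP1def
  set P2 : ℝ := 2 * n * n * cB * mB + 2 * n * M with hP2def
  clear_value P1 P2
  have hP1nn : 0 ≤ P1 := by
    rw [hP1def]
    have h1 : (0:ℝ) ≤ 2 * n * n * mB :=
      mul_nonneg (by positivity) hmB0
    have h2 : (0:ℝ) ≤ 2 * Np * dB * mB :=
      mul_nonneg (mul_nonneg (by positivity) hdB0) hmB0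
    linarith
  have hP2nn : 0 ≤ P2 := by
    rw [hP2def]
    have h1 : (0:ℝ) ≤ 2 * n * n * cB * mB :=
      mul_nonneg (mul_nonneg (by positivity) hcB0) hmB0
    have h2 : (0:ℝ) ≤ 2 * n * M := mul_nonneg (by positivity) hM0
    linarith
  set C : ℝ := P1 + P2 + 1 with hCdef
  clear_value C
  have hCpos : 0 < C := by rw [hCdef]; linarith
  set δ₀ : ℝ := ((n : ℝ) + Np) * r ^ 2 with hδ₀def
  clear_value δ₀
  have hδ₀0 : 0 ≤ δ₀ := by rw [hδ₀def]; positivity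
  have hsq0 : 0 ≤ Real.sqrt (δ₀ + 1) := Real.sqrt_nonneg _
  refine ⟨r + Real.sqrt (δ₀ + 1), by linarith, C / 2, by linarith, ?_⟩
  intro ε hε t₀ ht₀ u₀ u hu₀C hu₀r hsol t ht
  obtain ⟨hhist, hucont, hude⟩ := hsol
  obtain ⟨ht1, ht2⟩ := ht
  have hut₀ : ‖u t₀‖ ≤ r := by
    have h0 : u t₀ = u₀ 0 := by simpa using hhist 0 le_rfl
    have h1 : Real.exp (γ * ((⟨0, Set.self_mem_Iic⟩ : Iic (0:ℝ)) : Iic (0:ℝ)).1) *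
        ‖u₀ ((⟨0, Set.self_mem_Iic⟩ : Iic (0:ℝ)) : Iic (0:ℝ)).1‖ ≤ gNorm γ u₀ :=
      le_ciSup hu₀C.2.2 (⟨0, Set.self_mem_Iic⟩ : Iic (0:ℝ))
    simp only [Real.exp_zero, mul_zero, one_mul] at h1
    rw [h0]
    exact h1.trans hu₀r
  set V : ℝ → ℝ := fun τ =>
    ∑ i : Fin n, ((u τ).1 i) ^ 2 + ∑ p : IdxZ n, ((u τ).2 p) ^ 2 with hVdef
  set Vd : ℝ → ℝ := fun τ =>
    ∑ i : Fin n, 2 * ((u τ).1 i) * ((fEps ε A B μ c d Γ Istim τ (hist u τ)).1 i) +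
    ∑ p : IdxZ n, 2 * ((u τ).2 p) * ((fEps ε A B μ c d Γ Istim τ (hist u τ)).2 p) with hVddef
  clear_value V Vd
  have hderiv : ∀ x ∈ Ico t₀ (t₀ + T), HasDerivAt V (Vd x) x := by
    intro x hx
    have hu' := hude x hx
    have h1 : ∀ i : Fin n, HasDerivAt (fun τ => ((u τ).1 i) ^ 2)
        (2 * ((u x).1 i) * ((fEps ε A B μ c d Γ Istim x (hist u x)).1 i)) x := by
      intro i
      simpa using (hasDerivAt_fst_apply hu' i).fun_pow 2
    have h2 : ∀ p : IdxZ n, HasDerivAt (fun τ => ((u τ).2 p) ^ 2)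
        (2 * ((u x).2 p) * ((fEps ε A B μ c d Γ Istim x (hist u x)).2 p)) x := by
      intro p
      simpa using (hasDerivAt_snd_apply hu' p).fun_pow 2
    simp only [hVdef, hVddef]
    exact (HasDerivAt.fun_sum fun i _ => h1 i).add (HasDerivAt.fun_sum fun p _ => h2 p)
  have hsub : Icc t₀ t ⊆ Iio (t₀ + T) := fun s hs => lt_of_le_of_lt hs.2 ht2
  have hVcont : ContinuousOn V (Icc t₀ t) := by
    rw [hVdef]
    have hcont : Continuous fun v : NState n =>
        ∑ i : Fin n, (v.1 i) ^ 2 + ∑ p : IdxZ n, (v.2 p) ^ 2 := by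
      refine Continuous.add ?_ ?_
      · exact continuous_finset_sum _ fun i _ => ((continuous_apply i).comp continuous_fst).pow 2
      · exact continuous_finset_sum _ fun p _ => ((continuous_apply p).comp continuous_snd).pow 2
    exact hcont.comp_continuousOn (hucont.mono hsub)
  -- pointwise differential inequality
  have hbound : ∀ x ∈ Ico t₀ (t₀ + T), Vd x ≤ C * V x + C := by
    intro x hx
    have hxab : x ∈ Icc a (b + T) :=
      ⟨le_trans ht₀.1 hx.1, le_of_lt (lt_of_lt_of_le hx.2 (by linarith [ht₀.2]))⟩
    set R : ℝ := ‖u x‖ with hRdef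
    clear_value R
    have hR0 : 0 ≤ R := by rw [hRdef]; exact norm_nonneg _
    have hxc : ∀ i, |(u x).1 i| ≤ R := by
      intro i
      have h := (norm_le_pi_norm (u x).1 i).trans (norm_fst_le (u x))
      rw [hRdef]
      simpa [Real.norm_eq_abs] using h
    have hzc : ∀ p, |(u x).2 p| ≤ R := by
      intro p
      have h := (norm_le_pi_norm (u x).2 p).trans (norm_snd_le (u x))
      rw [hRdef]
      simpa [Real.norm_eq_abs] using h
    have hJ : ∀ (p : IdxZ n) (k : Fin n),
        |∫ τ in Iic (0:ℝ), sigm ε ((hist u x τ).1 k - Γ k) ∂(μ p)| ≤ mB :=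
      fun p k => le_trans (abs_setIntegral_sigm_le ε _ (μ p) (hfin p)) (hmB p)
    have hg1 : ∀ i : Fin n, (fEps ε A B μ c d Γ Istim x (hist u x)).1 i =
        -A i ((u x).1 i) * ((u x).1 i) +
        ((∑ k : Fin n, if h : k ≠ i then
            ((u x).2 ⟨(k, i), h⟩ - c ⟨(k, i), h⟩) *
              ∫ τ in Iic (0:ℝ), sigm ε ((hist u x τ).1 k - Γ k) ∂(μ ⟨(k, i), h⟩)
          else 0) + Istim i x) := by
      intro i
      simp [fEps, decayT, sigTerm, stimT, hist, add_assoc]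
    have hg2 : ∀ p : IdxZ n, (fEps ε A B μ c d Γ Istim x (hist u x)).2 p =
        -B p ((u x).2 p) * ((u x).2 p) +
        d p * (∫ τ in Iic (0:ℝ), sigm ε ((hist u x τ).1 p.1.1 - Γ p.1.1) ∂(μ p)) *
          max ((u x).1 p.1.2) 0 := by
      intro p
      simp [fEps, decayT, sigTerm, stimT, hist]
    have hkey1 : ∀ i : Fin n, (u x).1 i * (fEps ε A B μ c d Γ Istim x (hist u x)).1 i ≤
        R * ((n : ℝ) * ((R + cB) * mB) + M) := by
      intro i
      rw [hg1 i]
      have hterm : ∀ k : Fin n, |if h : k ≠ i then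
          ((u x).2 ⟨(k, i), h⟩ - c ⟨(k, i), h⟩) *
            ∫ τ in Iic (0:ℝ), sigm ε ((hist u x τ).1 k - Γ k) ∂(μ ⟨(k, i), h⟩)
          else 0| ≤ (R + cB) * mB := by
        intro k
        by_cases h : k ≠ i
        · rw [dif_pos h, abs_mul]
          have h1 : |(u x).2 ⟨(k, i), h⟩ - c ⟨(k, i), h⟩| ≤ R + cB := by
            have := abs_sub ((u x).2 ⟨(k, i), h⟩) (c ⟨(k, i), h⟩)
            have h2 := hzc ⟨(k, i), h⟩
            have h3 : |c ⟨(k, i), h⟩| = c ⟨(k, i), h⟩ := abs_of_nonneg (hc _)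
            have h4 := hcB ⟨(k, i), h⟩
            linarith
          exact mul_le_mul h1 (hJ _ k) (abs_nonneg _) (add_nonneg hR0 hcB0)
        · rw [dif_neg h]
          simpa using mul_nonneg (add_nonneg hR0 hcB0) hmB0
      have hconst : ∑ _k : Fin n, ((R + cB) * mB) = (n : ℝ) * ((R + cB) * mB) := by
        simp [Finset.sum_const, Finset.card_univ, nsmul_eq_mul]
      have hSiB : |∑ k : Fin n, if h : k ≠ i then
          ((u x).2 ⟨(k, i), h⟩ - c ⟨(k, i), h⟩) *
            ∫ τ in Iic (0:ℝ), sigm ε ((hist u x τ).1 k - Γ k) ∂(μ ⟨(k, i), h⟩)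
          else 0| ≤ (n : ℝ) * ((R + cB) * mB) :=
        ((Finset.abs_sum_le_sum_abs _ _).trans
          (Finset.sum_le_sum fun k _ => hterm k)).trans_eq hconst
      have hIB : |Istim i x| ≤ M := hIb i x hxab
      have hAnn : -A i ((u x).1 i) * ((u x).1 i) * ((u x).1 i) ≤ 0 := by
        have h1 : α ≤ A i ((u x).1 i) := (hA i).2 ((u x).1 i)
        nlinarith [sq_nonneg ((u x).1 i)]
      have h3 : (u x).1 i * ((∑ k : Fin n, if h : k ≠ i then
          ((u x).2 ⟨(k, i), h⟩ - c ⟨(k, i), h⟩) *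
            ∫ τ in Iic (0:ℝ), sigm ε ((hist u x τ).1 k - Γ k) ∂(μ ⟨(k, i), h⟩)
          else 0) + Istim i x) ≤ R * ((n : ℝ) * ((R + cB) * mB) + M) := by
        calc (u x).1 i * _ ≤ |(u x).1 i * _| := le_abs_self _
          _ = |(u x).1 i| * |_| := abs_mul _ _
          _ ≤ R * ((n : ℝ) * ((R + cB) * mB) + M) :=
              mul_le_mul (hxc i) ((abs_add_le _ _).trans (add_le_add hSiB hIB))
                (abs_nonneg _) hR0
      linarith [hAnn, h3]
    have hkey2 : ∀ p : IdxZ n, (u x).2 p * (fEps ε A B μ c d Γ Istim x (hist u x)).2 p ≤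
        R * (dB * mB * R) := by
      intro p
      rw [hg2 p]
      have hBnn : -B p ((u x).2 p) * ((u x).2 p) * ((u x).2 p) ≤ 0 := by
        have h1 : α ≤ B p ((u x).2 p) := (hB p).2 ((u x).2 p)
        nlinarith [sq_nonneg ((u x).2 p)]
      have hmax : |max ((u x).1 p.1.2) 0| ≤ R := by
        rw [abs_of_nonneg (le_max_right _ _)]
        exact max_le ((le_abs_self _).trans (hxc _)) hR0
      have hdp : |d p| ≤ dB := by rw [abs_of_nonneg (hd p)]; exact hdB p
      have habs : |d p * (∫ τ in Iic (0:ℝ),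
          sigm ε ((hist u x τ).1 p.1.1 - Γ p.1.1) ∂(μ p)) * max ((u x).1 p.1.2) 0|
          ≤ dB * mB * R := by
        rw [abs_mul, abs_mul]
        exact mul_le_mul (mul_le_mul hdp (hJ p p.1.1) (abs_nonneg _) hdB0) hmax
          (abs_nonneg _) (mul_nonneg hdB0 hmB0)
      have h3 : (u x).2 p * (d p * (∫ τ in Iic (0:ℝ),
          sigm ε ((hist u x τ).1 p.1.1 - Γ p.1.1) ∂(μ p)) * max ((u x).1 p.1.2) 0)
          ≤ R * (dB * mB * R) := by
        calc (u x).2 p * _ ≤ |(u x).2 p * _| := le_abs_self _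
          _ = |(u x).2 p| * |_| := abs_mul _ _
          _ ≤ R * (dB * mB * R) := mul_le_mul (hzc p) habs (abs_nonneg _) hR0
      linarith [hBnn, h3]
    have hsum1 : ∑ i : Fin n, 2 * ((u x).1 i) *
        ((fEps ε A B μ c d Γ Istim x (hist u x)).1 i) ≤
        (n : ℝ) * (2 * (R * ((n : ℝ) * ((R + cB) * mB) + M))) := by
      have h := Finset.sum_le_sum (s := Finset.univ)
        (fun i _ => (by linarith [hkey1 i] :
          2 * ((u x).1 i) * ((fEps ε A B μ c d Γ Istim x (hist u x)).1 i) ≤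
            2 * (R * ((n : ℝ) * ((R + cB) * mB) + M))))
      calc _ ≤ ∑ _i : Fin n, 2 * (R * ((n : ℝ) * ((R + cB) * mB) + M)) := h
        _ = (n : ℝ) * (2 * (R * ((n : ℝ) * ((R + cB) * mB) + M))) := by
            simp [Finset.sum_const, Finset.card_univ, nsmul_eq_mul]
    have hsum2 : ∑ p : IdxZ n, 2 * ((u x).2 p) *
        ((fEps ε A B μ c d Γ Istim x (hist u x)).2 p) ≤
        (Np : ℝ) * (2 * (R * (dB * mB * R))) := by
      have h := Finset.sum_le_sum (s := Finset.univ)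
        (fun p _ => (by linarith [hkey2 p] :
          2 * ((u x).2 p) * ((fEps ε A B μ c d Γ Istim x (hist u x)).2 p) ≤
            2 * (R * (dB * mB * R))))
      calc _ ≤ ∑ _p : IdxZ n, 2 * (R * (dB * mB * R)) := h
        _ = (Np : ℝ) * (2 * (R * (dB * mB * R))) := by
            simp [Finset.sum_const, Finset.card_univ, nsmul_eq_mul, hNpdef]
    have hsq : R ^ 2 ≤ V x := by
      simp only [hVdef, hRdef]
      exact nstate_normSq_le (u x)
    have hV0 : 0 ≤ V x := by
      simp only [hVdef]
      have := Finset.sum_nonneg (s := Finset.univ) fun i (_ : i ∈ Finset.univ) =>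
        sq_nonneg ((u x).1 i)
      have := Finset.sum_nonneg (s := Finset.univ) fun p (_ : p ∈ Finset.univ) =>
        sq_nonneg ((u x).2 p)
      linarith
    have hRleV : R ≤ V x + 1 := by nlinarith [hsq, sq_nonneg (R - 1)]
    have h1 : P1 * R ^ 2 ≤ P1 * V x := mul_le_mul_of_nonneg_left hsq hP1nn
    have h2 : P2 * R ≤ P2 * (V x + 1) := mul_le_mul_of_nonneg_left hRleV hP2nn
    have hcomb : (n : ℝ) * (2 * (R * ((n : ℝ) * ((R + cB) * mB) + M))) +
        (Np : ℝ) * (2 * (R * (dB * mB * R))) = P1 * R ^ 2 + P2 * R := by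
      simp only [hP1def, hP2def]
      ring
    simp only [hVddef]
    rw [hCdef]
    linarith [hsum1, hsum2, h1, h2, hcomb, hV0, hP1nn, hP2nn]
  -- Grönwall
  have hgron : ∀ τ ∈ Icc t₀ t, V τ ≤ gronwallBound δ₀ C C (τ - t₀) := by
    apply le_gronwallBound_of_liminf_deriv_right_le (f' := Vd) hVcont
    · intro x hx rr hrr
      have hx' : x ∈ Ico t₀ (t₀ + T) := ⟨hx.1, lt_trans hx.2 ht2⟩
      exact ((hderiv x hx').hasDerivWithinAt).liminf_right_slope_le hrr
    · -- initial bound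
      have hb1 : ∀ i : Fin n, ((u t₀).1 i) ^ 2 ≤ r ^ 2 := by
        intro i
        have h := (norm_le_pi_norm (u t₀).1 i).trans ((norm_fst_le (u t₀)).trans hut₀)
        rw [Real.norm_eq_abs] at h
        nlinarith [abs_nonneg ((u t₀).1 i), sq_abs ((u t₀).1 i)]
      have hb2 : ∀ p : IdxZ n, ((u t₀).2 p) ^ 2 ≤ r ^ 2 := by
        intro p
        have h := (norm_le_pi_norm (u t₀).2 p).trans ((norm_snd_le (u t₀)).trans hut₀)
        rw [Real.norm_eq_abs] at h
        nlinarith [abs_nonneg ((u t₀).2 p), sq_abs ((u t₀).2 p)]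
      have s1 : ∑ i : Fin n, ((u t₀).1 i) ^ 2 ≤ (n : ℝ) * r ^ 2 := by
        calc ∑ i : Fin n, ((u t₀).1 i) ^ 2 ≤ ∑ _i : Fin n, r ^ 2 :=
            Finset.sum_le_sum fun i _ => hb1 i
          _ = (n : ℝ) * r ^ 2 := by simp [Finset.sum_const, Finset.card_univ, nsmul_eq_mul]
      have s2 : ∑ p : IdxZ n, ((u t₀).2 p) ^ 2 ≤ (Np : ℝ) * r ^ 2 := by
        calc ∑ p : IdxZ n, ((u t₀).2 p) ^ 2 ≤ ∑ _p : IdxZ n, r ^ 2 :=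
            Finset.sum_le_sum fun p _ => hb2 p
          _ = (Np : ℝ) * r ^ 2 := by
            simp [Finset.sum_const, Finset.card_univ, nsmul_eq_mul, hNpdef]
      simp only [hVdef, hδ₀def]
      nlinarith [s1, s2, sq_nonneg r]
    · exact fun x hx => hbound x ⟨hx.1, lt_trans hx.2 ht2⟩
  have hnorm : ∀ τ ∈ Icc t₀ t,
      ‖u τ‖ ≤ Real.sqrt (δ₀ + 1) * Real.exp (C / 2 * (τ - t₀)) := by
    intro τ hτ
    have h1 : V τ ≤ gronwallBound δ₀ C C (τ - t₀) := hgron τ hτ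
    have h2 : gronwallBound δ₀ C C (τ - t₀) =
        (δ₀ + 1) * Real.exp (C * (τ - t₀)) - 1 := by
      simp only [gronwallBound_of_K_ne_0 hCpos.ne']
      rw [div_self hCpos.ne']
      ring
    have h3 := nstate_normSq_le (u τ)
    simp only [hVdef] at h1
    have hsqle : ‖u τ‖ ^ 2 ≤ (δ₀ + 1) * Real.exp (C * (τ - t₀)) := by
      rw [h2] at h1
      linarith
    calc ‖u τ‖ = Real.sqrt (‖u τ‖ ^ 2) := (Real.sqrt_sq (norm_nonneg _)).symm
      _ ≤ Real.sqrt ((δ₀ + 1) * Real.exp (C * (τ - t₀))) := Real.sqrt_le_sqrt hsqle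
      _ = Real.sqrt (δ₀ + 1) * Real.sqrt (Real.exp (C * (τ - t₀))) :=
          Real.sqrt_mul (by linarith) _
      _ = Real.sqrt (δ₀ + 1) * Real.exp (C * (τ - t₀) / 2) := by rw [← Real.exp_half]
      _ = Real.sqrt (δ₀ + 1) * Real.exp (C / 2 * (τ - t₀)) := by
          rw [show C * (τ - t₀) / 2 = C / 2 * (τ - t₀) by ring]
  -- conclude the `C_γ` bound
  have hk1 : (0:ℝ) ≤ r + Real.sqrt (δ₀ + 1) := by linarith
  have hexp1 : 1 ≤ Real.exp (C / 2 * (t - t₀)) :=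
    Real.one_le_exp (mul_nonneg (by linarith) (by linarith))
  have hRHS0 : (0:ℝ) ≤ (r + Real.sqrt (δ₀ + 1)) * Real.exp (C / 2 * (t - t₀)) :=
    mul_nonneg hk1 (Real.exp_pos _).le
  refine Real.iSup_le (fun sp => ?_) hRHS0
  obtain ⟨s, hs⟩ := sp
  have hs0 : s ≤ 0 := hs
  show Real.exp (γ * s) * ‖u (t + s)‖ ≤ _
  by_cases hcase : t + s ≤ t₀
  · have hs' : t + s - t₀ ≤ 0 := by linarith
    have heq : u (t + s) = u₀ (t + s - t₀) := by
      have h := hhist (t + s - t₀) hs'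
      rwa [show t₀ + (t + s - t₀) = t + s by ring] at h
    have hle : Real.exp (γ * (t + s - t₀)) * ‖u₀ (t + s - t₀)‖ ≤ r :=
      (le_ciSup hu₀C.2.2 (⟨t + s - t₀, hs'⟩ : Iic (0:ℝ))).trans hu₀r
    have hfac : Real.exp (γ * s) =
        Real.exp (γ * (t₀ - t)) * Real.exp (γ * (t + s - t₀)) := by
      rw [← Real.exp_add]; ring_nf
    have hexp2 : Real.exp (γ * (t₀ - t)) ≤ 1 :=
      Real.exp_le_one_iff.mpr (mul_nonpos_of_nonneg_of_nonpos hγ.le (by linarith))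
    have hmid : (0:ℝ) ≤ Real.exp (γ * (t + s - t₀)) * ‖u₀ (t + s - t₀)‖ :=
      mul_nonneg (Real.exp_pos _).le (norm_nonneg _)
    calc Real.exp (γ * s) * ‖u (t + s)‖ =
        Real.exp (γ * (t₀ - t)) * (Real.exp (γ * (t + s - t₀)) * ‖u₀ (t + s - t₀)‖) := by
          rw [heq, hfac]; ring
      _ ≤ 1 * r := mul_le_mul hexp2 hle hmid zero_le_one
      _ ≤ (r + Real.sqrt (δ₀ + 1)) * Real.exp (C / 2 * (t - t₀)) := by
          rw [one_mul]
          have hp : 0 ≤ (r + Real.sqrt (δ₀ + 1)) * (Real.exp (C / 2 * (t - t₀)) - 1) :=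
            mul_nonneg hk1 (by linarith)
          nlinarith [hp]
  · push_neg at hcase
    have hτmem : t + s ∈ Icc t₀ t := ⟨hcase.le, by linarith⟩
    have h1 := hnorm (t + s) hτmem
    have hexps : Real.exp (γ * s) ≤ 1 :=
      Real.exp_le_one_iff.mpr (mul_nonpos_of_nonneg_of_nonpos hγ.le hs)
    have hmono : Real.exp (C / 2 * (t + s - t₀)) ≤ Real.exp (C / 2 * (t - t₀)) :=
      Real.exp_le_exp.mpr (mul_le_mul_of_nonneg_left (by linarith) (by linarith))
    calc Real.exp (γ * s) * ‖u (t + s)‖ ≤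
        1 * (Real.sqrt (δ₀ + 1) * Real.exp (C / 2 * (t + s - t₀))) :=
          mul_le_mul hexps h1 (norm_nonneg _) zero_le_one
      _ ≤ (r + Real.sqrt (δ₀ + 1)) * Real.exp (C / 2 * (t - t₀)) := by
          rw [one_mul]
          have hp1 : Real.sqrt (δ₀ + 1) * Real.exp (C / 2 * (t + s - t₀)) ≤
              Real.sqrt (δ₀ + 1) * Real.exp (C / 2 * (t - t₀)) :=
            mul_le_mul_of_nonneg_left hmono hsq0
          have hp2 : 0 ≤ r * Real.exp (C / 2 * (t - t₀)) :=
            mul_nonneg hr.le (Real.exp_pos _).le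
          nlinarith [hp1, hp2]

end
end
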